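/- arXiv:0904.2095 — 2 statements merged into one kernel-verified Lean document; each statement's English description precedes it below -/
import Mathlib

section
/- Let (A, v) be a special affine space: A is a nonempty affine space modelled on a real vector space V and v ∈ V is nonzero. The set Aff(A, ℝ) of affine maps f : A → ℝ is a real vector space under pointwise operations, and the map L : Aff(A, ℝ) → ℝ, L(f) := fᵛ(v) (evaluation of the linear part at v), is linear and surjective. Consequently the special affine dual A^# := {f ∈ Aff(A, ℝ) : fᵛ(v) = 1} is a nonempty affine subspace of Aff(A, ℝ) whose direction is {φ ∈ Aff(A, ℝ) : φᵛ(v) = 0}; moreover the constant function 1_A belongs to this direction and is nonzero, so (A^#, 1_A) is itself a special affine space. -/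
/-- For a special affine space `(A, v)` — here `P` a nonempty affine
space (torsor) over a real vector space `V` and `v ≠ 0` — the map
`L : Aff(A, ℝ) → ℝ`, `L f = fᵛ(v)` (evaluation of the linear part at `v`) is linear and
surjective; hence the special affine dual `A^# = {f : fᵛ(v) = 1}` is a nonempty affine
subspace of `Aff(A, ℝ)` with direction `{φ : φᵛ(v) = 0}`, and the constant function `1_A`
is a nonzero element of this direction, so `(A^#, 1_A)` is a special affine space. -/
theorem stmt_7 {V P : Type*} [AddCommGroup V] [Module ℝ V] [AddTorsor V P]
    (v : V) (hv : v ≠ 0) :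
    IsLinearMap ℝ (fun f : P →ᵃ[ℝ] ℝ => f.linear v) ∧
    Function.Surjective (fun f : P →ᵃ[ℝ] ℝ => f.linear v) ∧
    (∃ f : P →ᵃ[ℝ] ℝ, f.linear v = 1) ∧
    (∀ f g : P →ᵃ[ℝ] ℝ, f.linear v = 1 → g.linear v = 1 → (f - g).linear v = 0) ∧
    (∀ f φ : P →ᵃ[ℝ] ℝ, f.linear v = 1 → φ.linear v = 0 → (f + φ).linear v = 1) ∧
    (AffineMap.const ℝ P (1 : ℝ)).linear v = 0 ∧
    AffineMap.const ℝ P (1 : ℝ) ≠ 0 := by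
  -- construct a linear functional ℓ with ℓ v = 1
  have hinj : Function.Injective (LinearMap.toSpanSingleton ℝ V v) := by
    intro a b h
    have h2 : (a - b) • v = 0 := by
      simp only [LinearMap.toSpanSingleton_apply] at h
      rw [sub_smul, h, sub_self]
    rcases smul_eq_zero.mp h2 with h' | h'
    · exact sub_eq_zero.mp h'
    · exact absurd h' hv
  obtain ⟨g, hg⟩ := (LinearMap.toSpanSingleton ℝ V v).exists_leftInverse_of_injective
    (by rwa [LinearMap.ker_eq_bot])
  have hgv : g v = 1 := by
    have := LinearMap.congr_fun hg (1 : ℝ)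
    simpa [LinearMap.toSpanSingleton_apply] using this
  obtain ⟨p⟩ := (inferInstance : AddTorsor V P).nonempty
  set f : P →ᵃ[ℝ] ℝ := ⟨fun x => g (x -ᵥ p), g, fun u q => by
    simp [vadd_vsub_assoc, map_add]⟩ with hf
  have hfl : f.linear v = 1 := hgv
  refine ⟨⟨fun a b => rfl, fun c a => rfl⟩, ?_, ⟨f, hfl⟩, ?_, ?_, ?_, ?_⟩
  · intro c
    exact ⟨c • f, by simp [hfl]⟩
  · intro f g hf hg; simp [hf, hg]
  · intro f φ hf hφ; simp [hf, hφ]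
  · simp
  · intro h
    have := congr_fun (congrArg (fun f : P →ᵃ[ℝ] ℝ => (f : P → ℝ)) h) p
    simp at this
end

section
/- Let (A, v) be a special affine space with A a nonempty affine space modelled on a finite-dimensional real vector space V and v ∈ V nonzero. Let A^# = {f : A → ℝ affine : fᵛ(v) = 1} be its special affine dual, which is a special affine space with distinguished vector the constant function 1_A, and let (A^#)^# = {g : A^# → ℝ affine : gᵛ(1_A) = 1} be the dual of A^#. For each a ∈ A the evaluation map ev_a : A^# → ℝ, ev_a(f) := f(a), belongs to (A^#)^#, and the map a ↦ ev_a is a bijective affine map from A onto (A^#)^#. (Biduality for finite-dimensional special affine spaces: A^#^# ≅ A.) -/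
/-- The linear map `Aff(A, ℝ) → ℝ`, `f ↦ fᵛ(v)`, sending an affine function to the value
of its linear part at `v`. Its kernel is the model vector space of the special affine
dual `A^#`. -/
def linearPartAt {V P : Type*} [AddCommGroup V] [Module ℝ V] [AddTorsor V P]
    (v : V) : (P →ᵃ[ℝ] ℝ) →ₗ[ℝ] ℝ where
  toFun f := f.linear v
  map_add' f g := by simp
  map_smul' c f := by simp

/-- The affine map `p ↦ ℓ (p -ᵥ a₀)` with linear part `ℓ`. -/
noncomputable def Lmap {V P : Type*} [AddCommGroup V] [Module ℝ V] [AddTorsor V P]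
    (ℓ : V →ₗ[ℝ] ℝ) (a₀ : P) : P →ᵃ[ℝ] ℝ where
  toFun p := ℓ (p -ᵥ a₀)
  linear := ℓ
  map_vadd' p w := by simp [vadd_vsub_assoc, add_comm]

@[simp] lemma Lmap_linear {V P : Type*} [AddCommGroup V] [Module ℝ V] [AddTorsor V P]
    (ℓ : V →ₗ[ℝ] ℝ) (a₀ : P) : (Lmap ℓ a₀).linear = ℓ := rfl

@[simp] lemma Lmap_apply {V P : Type*} [AddCommGroup V] [Module ℝ V] [AddTorsor V P]
    (ℓ : V →ₗ[ℝ] ℝ) (a₀ p : P) : Lmap ℓ a₀ p = ℓ (p -ᵥ a₀) := rfl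

@[simp] lemma linearPartAt_apply {V P : Type*} [AddCommGroup V] [Module ℝ V] [AddTorsor V P]
    (v : V) (f : P →ᵃ[ℝ] ℝ) : linearPartAt v f = f.linear v := rfl

lemma mem_ker_linearPartAt {V P : Type*} [AddCommGroup V] [Module ℝ V] [AddTorsor V P]
    (v : V) (f : P →ᵃ[ℝ] ℝ) :
    f ∈ LinearMap.ker (linearPartAt (P := P) v) ↔ f.linear v = 0 := Iff.rfl

/-- The linear map sending a dual vector `μ` to the element
`Lmap (μ - μ v • ℓ₀) a₀` of the kernel of `linearPartAt v`. -/
noncomputable def kerElem {V P : Type*} [AddCommGroup V] [Module ℝ V] [AddTorsor V P]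
    (v : V) (ℓ₀ : V →ₗ[ℝ] ℝ) (hℓ₀ : ℓ₀ v = 1) (a₀ : P) :
    Module.Dual ℝ V →ₗ[ℝ] LinearMap.ker (linearPartAt (P := P) v) where
  toFun μ := ⟨Lmap (μ - μ v • ℓ₀) a₀, by
    rw [mem_ker_linearPartAt]; simp [hℓ₀]⟩
  map_add' μ ν := Subtype.ext (by
    ext p
    simp only [Lmap_apply, Submodule.coe_add, AffineMap.coe_add, Pi.add_apply,
      LinearMap.sub_apply, LinearMap.add_apply, LinearMap.smul_apply, smul_eq_mul]
    ring)
  map_smul' c μ := Subtype.ext (by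
    ext p
    simp only [Lmap_apply, SetLike.val_smul, AffineMap.coe_smul, Pi.smul_apply,
      LinearMap.sub_apply, LinearMap.smul_apply, smul_eq_mul, RingHom.id_apply]
    ring)

@[simp] lemma kerElem_apply {V P : Type*} [AddCommGroup V] [Module ℝ V] [AddTorsor V P]
    (v : V) (ℓ₀ : V →ₗ[ℝ] ℝ) (hℓ₀ : ℓ₀ v = 1) (a₀ : P) (μ : Module.Dual ℝ V) :
    (kerElem v ℓ₀ hℓ₀ a₀ μ : P →ᵃ[ℝ] ℝ) = Lmap (μ - μ v • ℓ₀) a₀ := rfl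

/-- biduality for finite-dimensional special affine spaces.
Let `(A, v)` be a special affine space over a finite-dimensional `V` (here `A = P`, a
torsor over `V`, `v ≠ 0`).  Elements of `A^#` are affine maps `f` with `fᵛ(v) = 1`; the
model space of `A^#` is `ker (linearPartAt v) = {φ : φᵛ(v) = 0}`, with distinguished
vector the constant function `1_A`.  Then: every evaluation `ev_a : A^# → ℝ` is affine
with linear part `gv` satisfying `gv(1_A) = 1`, i.e. `ev_a ∈ (A^#)^#`; the map
`a ↦ ev_a` is affine, injective, and surjective onto `(A^#)^#`. -/
theorem stmt_8 {V P : Type*} [AddCommGroup V] [Module ℝ V] [FiniteDimensional ℝ V]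
    [AddTorsor V P] (v : V) (hv : v ≠ 0) :
    (∀ a : P, ∃ gv : LinearMap.ker (linearPartAt (P := P) v) →ₗ[ℝ] ℝ,
      (∀ (f : {f : P →ᵃ[ℝ] ℝ // f.linear v = 1})
         (φ : LinearMap.ker (linearPartAt (P := P) v)),
        (f.1 + φ.1) a = f.1 a + gv φ) ∧
      gv ⟨AffineMap.const ℝ P (1 : ℝ),
        LinearMap.mem_ker.mpr (by simp [linearPartAt])⟩ = 1) ∧
    (∀ (a : P) (w : V) (f : {f : P →ᵃ[ℝ] ℝ // f.linear v = 1}),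
      f.1 (w +ᵥ a) = f.1 a + f.1.linear w) ∧
    (∀ a b : P, (∀ f : {f : P →ᵃ[ℝ] ℝ // f.linear v = 1}, f.1 a = f.1 b) → a = b) ∧
    (∀ (g : {f : P →ᵃ[ℝ] ℝ // f.linear v = 1} → ℝ)
       (gv : LinearMap.ker (linearPartAt (P := P) v) →ₗ[ℝ] ℝ),
      (∀ (f : {f : P →ᵃ[ℝ] ℝ // f.linear v = 1})
         (φ : LinearMap.ker (linearPartAt (P := P) v)),
        g ⟨f.1 + φ.1, by
          have h2 : (φ.1 : P →ᵃ[ℝ] ℝ).linear v = 0 := LinearMap.mem_ker.mp φ.2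
          simp [f.2, h2]⟩ = g f + gv φ) →
      gv ⟨AffineMap.const ℝ P (1 : ℝ),
        LinearMap.mem_ker.mpr (by simp [linearPartAt])⟩ = 1 →
      ∃ a : P, ∀ f : {f : P →ᵃ[ℝ] ℝ // f.linear v = 1}, g f = f.1 a) := by
  obtain ⟨a₀⟩ := (inferInstance : Nonempty P)
  -- a functional with value 1 at v
  obtain ⟨μ₀, hμ₀⟩ : ∃ μ : Module.Dual ℝ V, μ v ≠ 0 := by
    by_contra h
    push_neg at h
    exact hv ((Module.forall_dual_apply_eq_zero_iff ℝ v).mp h)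
  set ℓ₀ : V →ₗ[ℝ] ℝ := (μ₀ v)⁻¹ • μ₀ with hℓ₀def
  have hℓ₀v : ℓ₀ v = 1 := by
    simp [hℓ₀def, inv_mul_cancel₀ hμ₀]
  refine ⟨?_, ?_, ?_, ?_⟩
  · -- evaluation maps are affine with linear part sending 1_A to 1
    intro a
    refine ⟨{ toFun := fun φ => φ.1 a
              map_add' := fun φ ψ => by simp
              map_smul' := fun c φ => by simp }, fun f φ => rfl, by simp⟩
  · -- affinity of evaluation in the point
    intro a w f
    rw [f.1.map_vadd]
    simp [add_comm]
  · -- injectivity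
    intro a b h
    have h0 : ℓ₀ (a -ᵥ a₀) = ℓ₀ (b -ᵥ a₀) := h ⟨Lmap ℓ₀ a₀, by simp [hℓ₀v]⟩
    have key : ∀ ψ : V →ₗ[ℝ] ℝ, ψ v = 0 → ψ (a -ᵥ b) = 0 := by
      intro ψ hψ
      have h1 : (ℓ₀ + ψ) (a -ᵥ a₀) = (ℓ₀ + ψ) (b -ᵥ a₀) :=
        h ⟨Lmap (ℓ₀ + ψ) a₀, by simp [hℓ₀v, hψ]⟩
      simp only [LinearMap.add_apply] at h1
      have h2 : ψ (a -ᵥ a₀) = ψ (b -ᵥ a₀) := by linarith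
      rw [← vsub_sub_vsub_cancel_right a b a₀, map_sub, h2, sub_self]
    have hz : a -ᵥ b = 0 := by
      rw [← Module.forall_dual_apply_eq_zero_iff ℝ (a -ᵥ b)]
      intro μ
      have hψ : (μ - μ v • ℓ₀) v = 0 := by simp [hℓ₀v]
      have h3 := key (μ - μ v • ℓ₀) hψ
      have h4 : ℓ₀ (a -ᵥ b) = 0 := by
        rw [← vsub_sub_vsub_cancel_right a b a₀, map_sub, h0, sub_self]
      simp only [LinearMap.sub_apply, LinearMap.smul_apply, smul_eq_mul] at h3
      rw [h4] at h3
      linarith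
    exact eq_of_vsub_eq_zero hz
  · -- surjectivity
    intro g gv hadd h1
    set f₀ : {f : P →ᵃ[ℝ] ℝ // f.linear v = 1} := ⟨Lmap ℓ₀ a₀, by simp [hℓ₀v]⟩ with hf₀
    -- the double-dual functional
    set Ghat : Module.Dual ℝ V →ₗ[ℝ] ℝ :=
      g f₀ • Module.Dual.eval ℝ V v + gv ∘ₗ kerElem v ℓ₀ hℓ₀v a₀ with hGhat
    have hGhat_apply : ∀ μ : Module.Dual ℝ V,
        Ghat μ = g f₀ * μ v + gv (kerElem v ℓ₀ hℓ₀v a₀ μ) := fun μ => rfl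
    set w : V := (Module.evalEquiv ℝ V).symm Ghat with hw
    have hweval : ∀ μ : Module.Dual ℝ V, μ w = Ghat μ := fun μ =>
      Module.apply_evalEquiv_symm_apply ℝ V μ Ghat
    -- key computations
    have hzero : kerElem v ℓ₀ hℓ₀v a₀ ℓ₀ = 0 := by
      apply Subtype.ext
      ext p
      simp [hℓ₀v]
    have hl₀w : ℓ₀ w = g f₀ := by
      rw [hweval, hGhat_apply, hzero, map_zero, add_zero, hℓ₀v, mul_one]
    refine ⟨w +ᵥ a₀, fun f => ?_⟩
    -- decompose f = f₀ + φ
    have hφmem : f.1 - f₀.1 ∈ LinearMap.ker (linearPartAt (P := P) v) := by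
      rw [mem_ker_linearPartAt, AffineMap.sub_linear]
      simp [f.2, hf₀, hℓ₀v]
    set φ : LinearMap.ker (linearPartAt (P := P) v) := ⟨f.1 - f₀.1, hφmem⟩ with hφ
    have hgf : g f = g f₀ + gv φ := by
      have h5 := hadd f₀ φ
      have heq : (⟨f₀.1 + φ.1, by
          have h2 : (φ.1 : P →ᵃ[ℝ] ℝ).linear v = 0 := LinearMap.mem_ker.mp φ.2
          simp [f₀.2, h2, f.2]⟩ : {f : P →ᵃ[ℝ] ℝ // f.linear v = 1}) = f := by
        apply Subtype.ext
        simp [hφ]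
      rwa [heq] at h5
    -- the linear part of φ
    set ψ : V →ₗ[ℝ] ℝ := f.1.linear - ℓ₀ with hψdef
    have hψlin : (f.1 - f₀.1).linear = ψ := by
      rw [AffineMap.sub_linear, hψdef, hf₀]
      rfl
    have hψv : ψ v = 0 := by simp [hψdef, f.2, hℓ₀v]
    have hψmem : Lmap ψ a₀ ∈ LinearMap.ker (linearPartAt (P := P) v) := by
      rw [mem_ker_linearPartAt, Lmap_linear]; exact hψv
    -- decompose φ into constant + linear-at-a₀ part
    have hφdecomp : φ = ((f.1 - f₀.1) a₀) •
        (⟨AffineMap.const ℝ P (1 : ℝ), LinearMap.mem_ker.mpr (by simp [linearPartAt])⟩ :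
          LinearMap.ker (linearPartAt (P := P) v)) +
        ⟨Lmap ψ a₀, hψmem⟩ := by
      apply Subtype.ext
      ext p
      have h6 := (f.1 - f₀.1).map_vadd a₀ (p -ᵥ a₀)
      rw [vsub_vadd, hψlin] at h6
      simp only [hφ, Submodule.coe_add, SetLike.val_smul, AffineMap.coe_add, Pi.add_apply,
        AffineMap.coe_smul, Pi.smul_apply, AffineMap.coe_const, Function.const_apply,
        smul_eq_mul, mul_one, Lmap_apply]
      rw [h6]
      exact add_comm _ _
    have hψw : ψ w = gv ⟨Lmap ψ a₀, hψmem⟩ := by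
      have hKψ : kerElem v ℓ₀ hℓ₀v a₀ ψ = ⟨Lmap ψ a₀, hψmem⟩ := by
        apply Subtype.ext
        ext p
        simp [hψv]
      rw [hweval, hGhat_apply, hKψ, hψv, mul_zero, zero_add]
    have hgvφ : gv φ = (f.1 - f₀.1) a₀ + ψ w := by
      rw [hφdecomp, map_add, map_smul, h1, hψw]
      simp
    -- put everything together
    have hf₀a₀ : f₀.1 a₀ = 0 := by simp [hf₀]
    have hsub : (f.1 - f₀.1) a₀ = f.1 a₀ - f₀.1 a₀ := by
      rw [AffineMap.coe_sub]; rfl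
    have hψwval : ψ w = f.1.linear w - ℓ₀ w := by simp [hψdef]
    have hfval : f.1 (w +ᵥ a₀) = f.1.linear w + f.1 a₀ := by
      rw [f.1.map_vadd]
      simp [vadd_eq_add]
    rw [hgf, hgvφ, hsub, hf₀a₀, hψwval, hl₀w, hfval]
    ring
end
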